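/- Let Π ∈ M_m(ℝ) be a constant skew-symmetric matrix (Πᵀ = −Π), let H : ℝ^m → ℝ be of class C², let h ∈ ℝ, and let φ : ℝ^m → ℝ^m be a differentiable map satisfying the implicit midpoint relation φ(z) = z + h Π ∇H((z + φ(z))/2) for all z. Fix z ∈ ℝ^m and suppose the matrix I − (h/2) Π ∇²H(m) is invertible, where m = (z + φ(z))/2 and ∇²H(m) is the Hessian matrix of H at m. Then Dφ(z) Π Dφ(z)ᵀ = Π, i.e. the midpoint rule is a Poisson map for the constant Poisson structure Π. -/

import Mathlib

/-!
Differentiating the midpoint relation gives `(1 - A) Dφ(z) = 1 + A` with `A = (h/2) Π ∇²H(m)`,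
so `Dφ(z)` is the Cayley transform of `A`. As `Π` is skew and `∇²H(m)` symmetric,
`A Π + Π Aᵀ = 0`, which is exactly `(1 + A) Π (1 + A)ᵀ = (1 - A) Π (1 - A)ᵀ`; cancelling the
invertible `1 - A` on both sides gives `Dφ(z) Π Dφ(z)ᵀ = Π`.
-/

open Matrix

/-- The Euclidean gradient of `H : ℝ^m → ℝ` at `z`. -/
noncomputable def grad {m : ℕ} (H : (Fin m → ℝ) → ℝ) (z : Fin m → ℝ) : Fin m → ℝ :=
  fun i => fderiv ℝ H z (Pi.single i 1)

/-- The Jacobian matrix of `φ : ℝ^{m₁} → ℝ^{m₂}` at `z`. -/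
noncomputable def jacobian {m₁ m₂ : ℕ} (φ : (Fin m₁ → ℝ) → (Fin m₂ → ℝ)) (z : Fin m₁ → ℝ) :
    Matrix (Fin m₂) (Fin m₁) ℝ :=
  Matrix.of fun i j => fderiv ℝ φ z (Pi.single j 1) i

/-- The Hessian matrix of `H : ℝ^m → ℝ` at `z`. -/
noncomputable def hessian {m : ℕ} (H : (Fin m → ℝ) → ℝ) (z : Fin m → ℝ) :
    Matrix (Fin m) (Fin m) ℝ :=
  Matrix.of fun i j => fderiv ℝ (fun w => grad H w i) z (Pi.single j 1)

namespace Matrix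

variable {n R : Type*} [Fintype n] [DecidableEq n] [CommRing R]

theorem mul_mul_transpose_eq_of_one_sub_mul_eq_one_add {A P J : Matrix n n R}
    (hAP : A * P + P * Aᵀ = 0) (hA : IsUnit (1 - A)) (hJ : (1 - A) * J = 1 + A) :
    J * P * Jᵀ = P := by
  have hsandwich : (1 - A) * (J * P * Jᵀ) * (1 - A)ᵀ = (1 - A) * P * (1 - A)ᵀ :=
    calc (1 - A) * (J * P * Jᵀ) * (1 - A)ᵀ = ((1 - A) * J) * P * ((1 - A) * J)ᵀ := by
          simp only [transpose_mul, Matrix.mul_assoc]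
      _ = (1 + A) * P * (1 + A)ᵀ := by rw [hJ]
      _ = (1 - A) * P * (1 - A)ᵀ + 2 • (A * P + P * Aᵀ) := by
          simp only [transpose_add, transpose_sub, transpose_one]; noncomm_ring
      _ = (1 - A) * P * (1 - A)ᵀ := by rw [hAP, smul_zero, add_zero]
  exact hA.mul_left_cancel (((1 - A).isUnit_transpose.2 hA).mul_right_cancel hsandwich)

theorem smul_mul_mul_add_mul_transpose_eq_zero {P S : Matrix n n R} (hP : Pᵀ = -P)
    (hS : Sᵀ = S) (c : R) :
    c • (P * S) * P + P * (c • (P * S))ᵀ = 0 := by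
  simp [transpose_mul, hP, hS, Matrix.mul_assoc]

end Matrix

theorem jacobian_mulVec {m₁ m₂ : ℕ} (φ : (Fin m₁ → ℝ) → (Fin m₂ → ℝ)) (z v : Fin m₁ → ℝ) :
    jacobian φ z *ᵥ v = fderiv ℝ φ z v := by
  have hmat : jacobian φ z = LinearMap.toMatrix' (fderiv ℝ φ z : (Fin m₁ → ℝ) →ₗ[ℝ] _) := by
    ext i j
    simp [jacobian, LinearMap.toMatrix'_apply]
  rw [hmat, LinearMap.toMatrix'_mulVec]
  rfl

section Hessian

variable {m : ℕ} {H : (Fin m → ℝ) → ℝ}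

theorem hasFDerivAt_grad_apply (hH : ContDiff ℝ 2 H) (w : Fin m → ℝ) (i : Fin m) :
    HasFDerivAt (fun u => grad H u i)
      ((ContinuousLinearMap.apply ℝ ℝ (Pi.single i 1)).comp (fderiv ℝ (fderiv ℝ H) w)) w := by
  exact (ContinuousLinearMap.apply ℝ ℝ (Pi.single i (1 : ℝ))).hasFDerivAt.comp w
    ((hH.fderiv_right (m := 1) le_rfl).differentiable one_ne_zero w).hasFDerivAt

theorem hasFDerivAt_grad (hH : ContDiff ℝ 2 H) (w : Fin m → ℝ) :
    HasFDerivAt (grad H)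
      (ContinuousLinearMap.pi fun i =>
        (ContinuousLinearMap.apply ℝ ℝ (Pi.single i 1)).comp (fderiv ℝ (fderiv ℝ H) w)) w :=
  hasFDerivAt_pi.2 (hasFDerivAt_grad_apply hH w)

theorem hessian_apply (hH : ContDiff ℝ 2 H) (w : Fin m → ℝ) (i j : Fin m) :
    hessian H w i j = fderiv ℝ (fderiv ℝ H) w (Pi.single j 1) (Pi.single i 1) := by
  simp [hessian, (hasFDerivAt_grad_apply hH w i).fderiv]

theorem jacobian_grad (hH : ContDiff ℝ 2 H) (w : Fin m → ℝ) :
    jacobian (grad H) w = hessian H w := by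
  ext i j
  simp [jacobian, hessian_apply hH, (hasFDerivAt_grad hH w).fderiv]

theorem hessian_transpose (hH : ContDiff ℝ 2 H) (w : Fin m → ℝ) :
    (hessian H w)ᵀ = hessian H w := by
  have hsymm : IsSymmSndFDerivAt ℝ H w :=
    hH.contDiffAt.isSymmSndFDerivAt (by simp [minSmoothness_of_isRCLikeNormedField])
  ext i j
  simp only [transpose_apply, hessian_apply hH]
  exact hsymm _ _

end Hessian

section MidpointRule

variable {m : ℕ} {P : Matrix (Fin m) (Fin m) ℝ} {H : (Fin m → ℝ) → ℝ} {h : ℝ}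
  {φ : (Fin m → ℝ) → (Fin m → ℝ)} {z : Fin m → ℝ}

theorem jacobian_mulVec_of_midpoint (hH : ContDiff ℝ 2 H)
    (hmid : ∀ z, φ z = z + h • (P *ᵥ grad H ((1 / 2 : ℝ) • (z + φ z))))
    (hφ : DifferentiableAt ℝ φ z) (v : Fin m → ℝ) :
    jacobian φ z *ᵥ v = v + h • (P *ᵥ (hessian H ((1 / 2 : ℝ) • (z + φ z)) *ᵥ
      ((1 / 2 : ℝ) • (v + jacobian φ z *ᵥ v)))) := by
  set μ := (1 / 2 : ℝ) • (z + φ z)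
  have hμ : HasFDerivAt (fun w => (1 / 2 : ℝ) • (w + φ w))
      ((1 / 2 : ℝ) • (ContinuousLinearMap.id ℝ _ + fderiv ℝ φ z)) z := by
    exact ((hasFDerivAt_id z).add hφ.hasFDerivAt).const_smul (1 / 2 : ℝ)
  have hgrad : HasFDerivAt (grad H) (fderiv ℝ (grad H) μ) μ :=
    (hasFDerivAt_grad hH μ).differentiableAt.hasFDerivAt
  have hderiv := (hasFDerivAt_id z).add
    ((h • (Matrix.toLin' P).toContinuousLinearMap).hasFDerivAt.comp z (hgrad.comp z hμ))
      |>.congr_of_eventuallyEq (Filter.Eventually.of_forall hmid)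
  rw [← jacobian_grad hH, jacobian_mulVec (grad H), jacobian_mulVec φ]
  conv_lhs => rw [hderiv.fderiv]
  simp only [_root_.add_apply, ContinuousLinearMap.comp_apply,
    ContinuousLinearMap.id_apply, _root_.smul_apply,
    LinearMap.coe_toContinuousLinearMap', Matrix.toLin'_apply]

theorem one_sub_smul_mul_jacobian_of_midpoint (hH : ContDiff ℝ 2 H)
    (hmid : ∀ z, φ z = z + h • (P *ᵥ grad H ((1 / 2 : ℝ) • (z + φ z))))
    (hφ : DifferentiableAt ℝ φ z) :
    (1 - (h / 2) • (P * hessian H ((1 / 2 : ℝ) • (z + φ z)))) * jacobian φ z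
      = 1 + (h / 2) • (P * hessian H ((1 / 2 : ℝ) • (z + φ z))) := by
  refine ext_iff_mulVec.2 fun v => ?_
  have hJv := jacobian_mulVec_of_midpoint hH hmid hφ v
  simp only [← mulVec_mulVec, sub_mulVec, add_mulVec, one_mulVec, smul_mulVec, mulVec_smul,
    mulVec_add] at hJv ⊢
  linear_combination (norm := module) hJv

end MidpointRule

/-- For a constant skew-symmetric structure matrix `Π`, the implicit midpoint rule
`φ(z) = z + h Π ∇H((z + φ(z))/2)` is a Poisson map: `Dφ(z) Π Dφ(z)ᵀ = Π` (at any point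
`z` where `I − (h/2) Π ∇²H(m)` is invertible, `m` being the midpoint). -/
theorem midpoint_rule_is_poisson {m : ℕ}
    (P : Matrix (Fin m) (Fin m) ℝ) (hskew : Pᵀ = -P)
    (H : (Fin m → ℝ) → ℝ) (hH : ContDiff ℝ 2 H)
    (h : ℝ) (φ : (Fin m → ℝ) → (Fin m → ℝ)) (hφ : Differentiable ℝ φ)
    (hmid : ∀ z, φ z = z + h • (P *ᵥ grad H ((1 / 2 : ℝ) • (z + φ z))))
    (z : Fin m → ℝ)
    (hinv : IsUnit ((1 : Matrix (Fin m) (Fin m) ℝ)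
      - (h / 2) • (P * hessian H ((1 / 2 : ℝ) • (z + φ z))))) :
    jacobian φ z * P * (jacobian φ z)ᵀ = P :=
  mul_mul_transpose_eq_of_one_sub_mul_eq_one_add
    (smul_mul_mul_add_mul_transpose_eq_zero hskew (hessian_transpose hH _) _) hinv
    (one_sub_smul_mul_jacobian_of_midpoint hH hmid (hφ z))
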